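/- arXiv:2405.13288 — 4 statements merged into one kernel-verified Lean document; each statement's English description precedes it below -/
import Mathlib

section
/- Let K ≥ 3, let ã ∈ ℝ, and let b̃ ∈ ℝ^{K−1} be ordered with b̃_1 = 0. Define the conditional surrogate risk L_φ(a,b) := Σ_{y=1}^{K} P_cl(y; ã, b̃) · φ_AT(a, b, y). Then: (i) if φ(u) = log(1 + e^{−u}) (logistic loss), for every a ∈ ℝ and every ordered b ∈ ℝ^{K−1} with b_1 = 0, L_φ(a,b) ≥ L_φ(ã, b̃), with equality if and only if a = ã and b = b̃; (ii) if φ(u) = e^{−u} (exponential loss), for every a ∈ ℝ and every ordered b ∈ ℝ^{K−1} with b_1 = 0, L_φ(a,b) ≥ L_φ(ã/2, b̃/2), with equality if and only if a = ã/2 and b = b̃/2. (Conditional-risk form of Theorem 2 (b1).) -/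
open Finset

/-- The standard logistic sigmoid `σ(t) = 1/(1+e^{-t})`. -/
noncomputable def sigma (t : ℝ) : ℝ := 1 / (1 + Real.exp (-t))

/-- Cumulative probabilities of the cumulative logit (CL) model with `K` classes:
`cumCL K u b k = Σ_{l=1}^{k} P_cl(l; u, b)`, i.e. `σ(b_k - u)` for `1 ≤ k ≤ K-1`,
with the conventions `cumCL K u b 0 = 0` and `cumCL K u b K = 1`. -/
noncomputable def cumCL (K : ℕ) (u : ℝ) (b : ℕ → ℝ) (k : ℕ) : ℝ :=
  if k = 0 then 0 else if k < K then sigma (b k - u) else 1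

/-- The cumulative logit (CL) model: `P_cl(y; u, b)` for labels `y ∈ {1, …, K}`,
with biases `b` indexed by `1, …, K-1`. -/
noncomputable def Pcl (K : ℕ) (u : ℝ) (b : ℕ → ℝ) (y : ℕ) : ℝ :=
  cumCL K u b y - cumCL K u b (y - 1)

/-- The all-threshold (AT) loss built from `φ`:
`φ_AT(a, b, y) = Σ_{k=1}^{y-1} φ(a - b_k) + Σ_{k=y}^{K-1} φ(b_k - a)`. -/
noncomputable def phiAT (K : ℕ) (φ : ℝ → ℝ) (a : ℝ) (b : ℕ → ℝ) (y : ℕ) : ℝ :=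
  (∑ k ∈ Finset.Icc 1 (y - 1), φ (a - b k)) + ∑ k ∈ Finset.Icc y (K - 1), φ (b k - a)

lemma sigma_pos (t : ℝ) : 0 < sigma t := by
  unfold sigma; positivity

lemma sigma_lt_one (t : ℝ) : sigma t < 1 := by
  unfold sigma
  rw [div_lt_one (by positivity)]
  linarith [Real.exp_pos (-t)]

lemma one_sub_sigma (t : ℝ) : 1 - sigma t = (1 + Real.exp t)⁻¹ := by
  unfold sigma
  have h1 : (0:ℝ) < 1 + Real.exp (-t) := by positivity
  have h2 : (0:ℝ) < 1 + Real.exp t := by positivity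
  have he : Real.exp (-t) * Real.exp t = 1 := by
    rw [← Real.exp_add]; simp
  field_simp
  nlinarith [he]

lemma sigma_eq (t : ℝ) : sigma t = Real.exp t / (1 + Real.exp t) := by
  have := one_sub_sigma t
  have h2 : (0:ℝ) < 1 + Real.exp t := by positivity
  field_simp at this ⊢
  linarith

lemma sigma_inj {s t : ℝ} (h : sigma s = sigma t) : s = t := by
  rw [sigma_eq, sigma_eq] at h
  have hs : (0:ℝ) < 1 + Real.exp s := by positivity
  have ht : (0:ℝ) < 1 + Real.exp t := by positivity
  rw [div_eq_div_iff (by positivity) (by positivity)] at h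
  have : Real.exp s = Real.exp t := by nlinarith
  exact Real.exp_injective this

lemma log_sigma (t : ℝ) : Real.log (sigma t) = - Real.log (1 + Real.exp (-t)) := by
  rw [sigma, one_div, Real.log_inv]

lemma log_one_sub_sigma (t : ℝ) : Real.log (1 - sigma t) = - Real.log (1 + Real.exp t) := by
  rw [one_sub_sigma, Real.log_inv]


/-- KL-type inequality: Gibbs. -/
lemma kl_nonneg {p q : ℝ} (hp0 : 0 < p) (hp1 : p < 1) (hq0 : 0 < q) (hq1 : q < 1) :
    0 ≤ (1 - p) * Real.log ((1 - p) / (1 - q)) + p * Real.log (p / q) ∧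
    ((1 - p) * Real.log ((1 - p) / (1 - q)) + p * Real.log (p / q) = 0 ↔ q = p) := by
  have h1 : Real.log ((1 - q) / (1 - p)) ≤ (1 - q) / (1 - p) - 1 :=
    Real.log_le_sub_one_of_pos (div_pos (by linarith) (by linarith))
  have h2 : Real.log (q / p) ≤ q / p - 1 :=
    Real.log_le_sub_one_of_pos (by positivity)
  have e1 : Real.log ((1 - p) / (1 - q)) = - Real.log ((1 - q) / (1 - p)) := by
    rw [← Real.log_inv]; congr 1; rw [inv_div]
  have e2 : Real.log (p / q) = - Real.log (q / p) := by
    rw [← Real.log_inv]; congr 1; rw [inv_div]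
  have hpne : (1:ℝ) - p ≠ 0 := by linarith
  have f1 : (1 - p) * ((1 - q) / (1 - p) - 1) = p - q := by
    field_simp
    ring
  have hpne0 : p ≠ 0 := ne_of_gt hp0
  have f2 : p * (q / p - 1) = q - p := by
    rw [mul_comm, sub_mul, div_mul_cancel₀ _ hpne0, one_mul]
  have g1 : (1 - p) * Real.log ((1 - q) / (1 - p)) ≤ p - q := by
    calc (1 - p) * Real.log ((1 - q) / (1 - p)) ≤ (1 - p) * ((1 - q) / (1 - p) - 1) :=
          mul_le_mul_of_nonneg_left h1 (by linarith)
      _ = p - q := f1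
  have g2 : p * Real.log (q / p) ≤ q - p := by
    calc p * Real.log (q / p) ≤ p * (q / p - 1) := mul_le_mul_of_nonneg_left h2 hp0.le
      _ = q - p := f2
  constructor
  · rw [e1, e2]; linarith
  · constructor
    · intro h
      by_contra hne
      have hqp : q / p ≠ 1 := by
        intro hx
        apply hne
        rw [div_eq_one_iff_eq hp0.ne'] at hx
        linarith
      have h2' : Real.log (q / p) < q / p - 1 :=
        Real.log_lt_sub_one_of_pos (by positivity) hqp
      have g2' : p * Real.log (q / p) < q - p := by
        calc p * Real.log (q / p) < p * (q / p - 1) := by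
              exact mul_lt_mul_of_pos_left h2' hp0
          _ = q - p := f2
      rw [e1, e2] at h
      linarith
    · intro h; subst h
      rw [div_self hpne, div_self hpne0, Real.log_one]; ring

/-- Pointwise logistic: the cross-entropy-type function is uniquely minimized at t = s. -/
lemma glog_min (s t : ℝ) :
    (1 - sigma s) * Real.log (1 + Real.exp s) + sigma s * Real.log (1 + Real.exp (-s))
      ≤ (1 - sigma s) * Real.log (1 + Real.exp t) + sigma s * Real.log (1 + Real.exp (-t)) ∧
    ((1 - sigma s) * Real.log (1 + Real.exp t) + sigma s * Real.log (1 + Real.exp (-t))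
      = (1 - sigma s) * Real.log (1 + Real.exp s) + sigma s * Real.log (1 + Real.exp (-s))
      ↔ t = s) := by
  set p := sigma s with hp
  set q := sigma t with hq
  have hp0 := sigma_pos s; have hp1 := sigma_lt_one s
  have hq0 := sigma_pos t; have hq1 := sigma_lt_one t
  have key : (1 - p) * Real.log (1 + Real.exp t) + p * Real.log (1 + Real.exp (-t))
      - ((1 - p) * Real.log (1 + Real.exp s) + p * Real.log (1 + Real.exp (-s)))
      = (1 - p) * Real.log ((1 - p) / (1 - q)) + p * Real.log (p / q) := by
    have l1 : Real.log (1 + Real.exp t) = - Real.log (1 - q) := by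
      rw [log_one_sub_sigma]; ring
    have l2 : Real.log (1 + Real.exp (-t)) = - Real.log q := by
      rw [hq, log_sigma]; ring
    have l3 : Real.log (1 + Real.exp s) = - Real.log (1 - p) := by
      rw [log_one_sub_sigma]; ring
    have l4 : Real.log (1 + Real.exp (-s)) = - Real.log p := by
      rw [hp, log_sigma]; ring
    rw [l1, l2, l3, l4, Real.log_div (by linarith) (by linarith),
      Real.log_div (by linarith) (by linarith)]
    ring
  obtain ⟨hge, hiff⟩ := kl_nonneg hp0 hp1 hq0 hq1
  constructor
  · linarith
  · constructor
    · intro h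
      have : q = p := by rw [← hiff, ← key]; linarith
      exact sigma_inj (hq ▸ hp ▸ this)
    · intro h; subst h; rfl

/-- Pointwise exponential: uniquely minimized at t = s/2. -/
lemma gexp_min (s t : ℝ) :
    (1 - sigma s) * Real.exp (s/2) + sigma s * Real.exp (-(s/2))
      ≤ (1 - sigma s) * Real.exp t + sigma s * Real.exp (-t) ∧
    ((1 - sigma s) * Real.exp t + sigma s * Real.exp (-t)
      = (1 - sigma s) * Real.exp (s/2) + sigma s * Real.exp (-(s/2))
      ↔ t = s/2) := by
  have hD : (0:ℝ) < 1 + Real.exp s := by positivity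
  have key : (1 - sigma s) * Real.exp t + sigma s * Real.exp (-t)
      - ((1 - sigma s) * Real.exp (s/2) + sigma s * Real.exp (-(s/2)))
      = (Real.exp (t/2) - Real.exp ((s-t)/2))^2 / (1 + Real.exp s) := by
    rw [one_sub_sigma, sigma_eq]
    have hA : Real.exp t = Real.exp (t/2) * Real.exp (t/2) := by
      rw [← Real.exp_add]; ring_nf
    have hB : Real.exp s * Real.exp (-t) = Real.exp ((s-t)/2) * Real.exp ((s-t)/2) := by
      rw [← Real.exp_add, ← Real.exp_add]; ring_nf
    have hC : Real.exp (s/2) = Real.exp (t/2) * Real.exp ((s-t)/2) := by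
      rw [← Real.exp_add]; ring_nf
    have hE : Real.exp s * Real.exp (-(s/2)) = Real.exp (s/2) := by
      rw [← Real.exp_add]; ring_nf
    field_simp
    ring_nf
    ring_nf at hA hB hC hE
    nlinarith [hA, hB, hC, hE]
  constructor
  · nlinarith [sq_nonneg (Real.exp (t/2) - Real.exp ((s-t)/2)), hD,
      div_nonneg (sq_nonneg (Real.exp (t/2) - Real.exp ((s-t)/2))) hD.le]
  · constructor
    · intro h
      have h0 : (Real.exp (t/2) - Real.exp ((s-t)/2))^2 / (1 + Real.exp s) = 0 := by
        rw [← key]; linarith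
      have h1 : (Real.exp (t/2) - Real.exp ((s-t)/2))^2 = 0 := by
        have := div_eq_zero_iff.mp h0
        rcases this with h | h
        · exact h
        · linarith
      have h2 : Real.exp (t/2) = Real.exp ((s-t)/2) := by
        have := pow_eq_zero_iff (n := 2) (by norm_num) |>.mp h1
        linarith
      have := Real.exp_injective h2
      linarith
    · intro h; subst h; ring_nf

/-- Telescoping sum of Pcl. -/
lemma sum_Pcl (K : ℕ) (u : ℝ) (b : ℕ → ℝ) (m n : ℕ) (h : m ≤ n) :
    ∑ y ∈ Finset.Icc (m + 1) n, Pcl K u b y = cumCL K u b n - cumCL K u b m := by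
  rw [← Finset.Ico_add_one_right_eq_Icc, Finset.sum_Ico_eq_sum_range]
  have hrw : ∀ i, Pcl K u b (m + 1 + i) = cumCL K u b (m + (i + 1)) - cumCL K u b (m + i) := by
    intro i
    unfold Pcl
    congr 2 <;> omega
  simp only [hrw]
  rw [Finset.sum_range_sub (fun i => cumCL K u b (m + i))]
  congr 2
  omega

lemma cumCL_zero (K : ℕ) (u : ℝ) (b : ℕ → ℝ) : cumCL K u b 0 = 0 := by simp [cumCL]

lemma cumCL_top (K : ℕ) (hK : 1 ≤ K) (u : ℝ) (b : ℕ → ℝ) : cumCL K u b K = 1 := by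
  simp [cumCL]
  omega

lemma cumCL_mid (K : ℕ) (u : ℝ) (b : ℕ → ℝ) (k : ℕ) (h1 : 1 ≤ k) (h2 : k < K) :
    cumCL K u b k = sigma (b k - u) := by
  unfold cumCL
  rw [if_neg (by omega), if_pos h2]

/-- The key rearrangement of the conditional risk. -/
lemma swapA (K : ℕ) (hK : 1 ≤ K) (ta : ℝ) (tb : ℕ → ℝ) (φ : ℝ → ℝ) (a : ℝ) (b : ℕ → ℝ) :
    ∑ y ∈ Finset.Icc 1 K, Pcl K ta tb y * phiAT K φ a b y
      = ∑ k ∈ Finset.Icc 1 (K - 1),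
          ((1 - sigma (tb k - ta)) * φ (a - b k) + sigma (tb k - ta) * φ (b k - a)) := by
  have step1 : ∀ y ∈ Finset.Icc 1 K,
      Pcl K ta tb y * phiAT K φ a b y
        = ∑ k ∈ Finset.Icc 1 (K - 1),
            ((if k + 1 ≤ y then Pcl K ta tb y * φ (a - b k) else 0)
              + (if y ≤ k then Pcl K ta tb y * φ (b k - a) else 0)) := by
    intro y hy
    rw [Finset.mem_Icc] at hy
    rw [Finset.sum_add_distrib]
    unfold phiAT
    rw [mul_add, Finset.mul_sum, Finset.mul_sum]
    congr 1
    · rw [Finset.sum_ite, Finset.sum_const_zero, add_zero]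
      apply Finset.sum_congr _ (fun _ _ => rfl)
      ext k
      simp only [Finset.mem_Icc, Finset.mem_filter]
      omega
    · rw [Finset.sum_ite, Finset.sum_const_zero, add_zero]
      apply Finset.sum_congr _ (fun _ _ => rfl)
      ext k
      simp only [Finset.mem_Icc, Finset.mem_filter]
      omega
  rw [Finset.sum_congr rfl step1, Finset.sum_comm]
  apply Finset.sum_congr rfl
  intro k hk
  rw [Finset.mem_Icc] at hk
  rw [Finset.sum_add_distrib]
  congr 1
  · have e1 : ∑ y ∈ Finset.Icc 1 K, (if k + 1 ≤ y then Pcl K ta tb y * φ (a - b k) else 0)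
        = (∑ y ∈ Finset.Icc (k + 1) K, Pcl K ta tb y) * φ (a - b k) := by
      rw [Finset.sum_mul, Finset.sum_ite, Finset.sum_const_zero, add_zero]
      apply Finset.sum_congr _ (fun _ _ => rfl)
      ext y
      simp only [Finset.mem_Icc, Finset.mem_filter]
      omega
    rw [e1, sum_Pcl K ta tb k K (by omega), cumCL_top K hK, cumCL_mid K ta tb k hk.1 (by omega)]
  · have e2 : ∑ y ∈ Finset.Icc 1 K, (if y ≤ k then Pcl K ta tb y * φ (b k - a) else 0)
        = (∑ y ∈ Finset.Icc (0 + 1) k, Pcl K ta tb y) * φ (b k - a) := by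
      rw [Finset.sum_mul, Finset.sum_ite, Finset.sum_const_zero, add_zero]
      apply Finset.sum_congr _ (fun _ _ => rfl)
      ext y
      simp only [Finset.mem_Icc, Finset.mem_filter]
      omega
    rw [e2, sum_Pcl K ta tb 0 k (by omega), cumCL_zero, cumCL_mid K ta tb k hk.1 (by omega)]
    ring

/-- Conditional-risk form of Theorem 2 (b1): if the conditional distribution follows the
CL model with parameters `(ã, b̃)` where `b̃` is ordered with `b̃_1 = 0`, then the
conditional Logistic-AT surrogate risk is uniquely minimized (over ordered `b` with
`b_1 = 0`) at `(ã, b̃)`, and the conditional Exponential-AT surrogate risk is uniquely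
minimized at `(ã/2, b̃/2)`. -/
theorem stmt2 (K : ℕ) (hK : 3 ≤ K) (ta : ℝ) (tb : ℕ → ℝ)
    (htb1 : tb 1 = 0) (htbord : ∀ k, 1 ≤ k → k + 1 ≤ K - 1 → tb k ≤ tb (k + 1)) :
    (∀ (a : ℝ) (b : ℕ → ℝ), b 1 = 0 → (∀ k, 1 ≤ k → k + 1 ≤ K - 1 → b k ≤ b (k + 1)) →
      (∑ y ∈ Finset.Icc 1 K, Pcl K ta tb y *
          phiAT K (fun u => Real.log (1 + Real.exp (-u))) a b y)
        ≥ (∑ y ∈ Finset.Icc 1 K, Pcl K ta tb y *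
            phiAT K (fun u => Real.log (1 + Real.exp (-u))) ta tb y) ∧
      ((∑ y ∈ Finset.Icc 1 K, Pcl K ta tb y *
            phiAT K (fun u => Real.log (1 + Real.exp (-u))) a b y)
          = (∑ y ∈ Finset.Icc 1 K, Pcl K ta tb y *
              phiAT K (fun u => Real.log (1 + Real.exp (-u))) ta tb y)
        ↔ (a = ta ∧ ∀ k ∈ Finset.Icc 1 (K - 1), b k = tb k))) ∧
    (∀ (a : ℝ) (b : ℕ → ℝ), b 1 = 0 → (∀ k, 1 ≤ k → k + 1 ≤ K - 1 → b k ≤ b (k + 1)) →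
      (∑ y ∈ Finset.Icc 1 K, Pcl K ta tb y *
          phiAT K (fun u => Real.exp (-u)) a b y)
        ≥ (∑ y ∈ Finset.Icc 1 K, Pcl K ta tb y *
            phiAT K (fun u => Real.exp (-u)) (ta / 2) (fun k => tb k / 2) y) ∧
      ((∑ y ∈ Finset.Icc 1 K, Pcl K ta tb y *
            phiAT K (fun u => Real.exp (-u)) a b y)
          = (∑ y ∈ Finset.Icc 1 K, Pcl K ta tb y *
              phiAT K (fun u => Real.exp (-u)) (ta / 2) (fun k => tb k / 2) y)
        ↔ (a = ta / 2 ∧ ∀ k ∈ Finset.Icc 1 (K - 1), b k = tb k / 2))) := by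
  have hK1 : 1 ≤ K := by omega
  have h1mem : (1 : ℕ) ∈ Finset.Icc 1 (K - 1) := by
    rw [Finset.mem_Icc]; omega
  constructor
  · -- logistic part
    intro a b hb1 hbord
    rw [swapA K hK1 ta tb _ a b, swapA K hK1 ta tb _ ta tb]
    simp only [neg_sub]
    have hle : ∀ k ∈ Finset.Icc 1 (K - 1),
        (1 - sigma (tb k - ta)) * Real.log (1 + Real.exp (tb k - ta))
            + sigma (tb k - ta) * Real.log (1 + Real.exp (ta - tb k))
          ≤ (1 - sigma (tb k - ta)) * Real.log (1 + Real.exp (b k - a))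
            + sigma (tb k - ta) * Real.log (1 + Real.exp (a - b k)) := by
      intro k _
      have h := (glog_min (tb k - ta) (b k - a)).1
      rwa [neg_sub, neg_sub] at h
    refine ⟨Finset.sum_le_sum hle, ?_⟩
    constructor
    · intro h
      have hall := (Finset.sum_eq_sum_iff_of_le hle).mp h.symm
      have heq : ∀ k ∈ Finset.Icc 1 (K - 1), b k - a = tb k - ta := by
        intro k hk
        have h := (glog_min (tb k - ta) (b k - a)).2
        rw [neg_sub, neg_sub] at h
        exact h.mp (hall k hk).symm
      have ha : a = ta := by
        have := heq 1 h1mem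
        rw [hb1, htb1] at this
        linarith
      refine ⟨ha, fun k hk => ?_⟩
      have := heq k hk
      rw [ha] at this
      linarith
    · rintro ⟨ha, hbk⟩
      apply Finset.sum_congr rfl
      intro k hk
      rw [hbk k hk, ha]
  · -- exponential part
    intro a b hb1 hbord
    rw [swapA K hK1 ta tb _ a b, swapA K hK1 ta tb _ (ta / 2) (fun k => tb k / 2)]
    simp only [neg_sub]
    have hhalf : ∀ k : ℕ, tb k / 2 - ta / 2 = (tb k - ta) / 2 := fun k => by ring
    have hhalf2 : ∀ k : ℕ, ta / 2 - tb k / 2 = -((tb k - ta) / 2) := fun k => by ring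
    simp only [hhalf, hhalf2]
    have hle : ∀ k ∈ Finset.Icc 1 (K - 1),
        (1 - sigma (tb k - ta)) * Real.exp ((tb k - ta) / 2)
            + sigma (tb k - ta) * Real.exp (-((tb k - ta) / 2))
          ≤ (1 - sigma (tb k - ta)) * Real.exp (b k - a)
            + sigma (tb k - ta) * Real.exp (a - b k) := by
      intro k _
      have h := (gexp_min (tb k - ta) (b k - a)).1
      rwa [neg_sub (b k) a] at h
    refine ⟨Finset.sum_le_sum hle, ?_⟩
    constructor
    · intro h
      have hall := (Finset.sum_eq_sum_iff_of_le hle).mp h.symm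
      have heq : ∀ k ∈ Finset.Icc 1 (K - 1), b k - a = (tb k - ta) / 2 := by
        intro k hk
        have h := (gexp_min (tb k - ta) (b k - a)).2
        rw [neg_sub (b k) a] at h
        exact h.mp (hall k hk).symm
      have ha : a = ta / 2 := by
        have := heq 1 h1mem
        rw [hb1, htb1] at this
        linarith
      refine ⟨ha, fun k hk => ?_⟩
      have := heq k hk
      rw [ha] at this
      linarith
    · rintro ⟨ha, hbk⟩
      apply Finset.sum_congr rfl
      intro k hk
      rw [hbk k hk, ha]
      ring_nf
end

section
/- Let K ≥ 3 and consider the data model (ν, p). For x ∈ ℝ^d and y ∈ {1,…,K−1} set F_y(x) := Σ_{l=1}^{y} p(x)_l and F̄_y := ∫ F_y(x) dν(x). Define b̃ ∈ ℝ^{K−1} by b̃_y := 2(F̄_y − F̄_1), and define ã : ℝ^d → ℝ by ã(x) := 1 + (2/(K−1)) Σ_{y=1}^{K−1} (F̄_y − F̄_1) − (2/(K−1)) Σ_{y=1}^{K−1} F_y(x). Let Risk(a,b) := ∫ Σ_{y=1}^{K} p(x)_y · φ_AT(a(x), b, y) dν(x) with φ(u) = (1 − u)² (Squared-AT loss). Then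 b̃_1 = 0 and b̃ is non-decreasing, and for every measurable a : ℝ^d → ℝ and every b ∈ ℝ^{K−1} with b_1 = 0 one has Risk(a, b) ≥ Risk(ã, b̃); moreover, if Risk(a, b) = Risk(ã, b̃) < ∞ then a = ã ν-almost everywhere and b = b̃. (Minimizer characterization of Theorem 4 for the Squared-AT loss.) -/
open Finset MeasureTheory

lemma inner_eq (K : ℕ) (p F : ℕ → ℝ) (hp1 : ∑ y ∈ Finset.Icc 1 K, p y = 1)
    (hF : ∀ y, F y = ∑ l ∈ Finset.Icc 1 y, p l) (a : ℝ) (b : ℕ → ℝ) :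
    ∑ y ∈ Finset.Icc 1 K, p y * phiAT K (fun u => (1 - u) ^ 2) a b y
      = ∑ k ∈ Finset.Icc 1 (K - 1),
          ((a - b k - 1 + 2 * F k) ^ 2 + 4 * (F k * (1 - F k))) := by
  have key : ∀ k ∈ Finset.Icc 1 (K - 1), ∑ y ∈ Finset.Icc (k+1) K, p y = 1 - F k := by
    intro k hk
    rw [Finset.mem_Icc] at hk
    have hkK : k ≤ K := le_trans hk.2 (Nat.sub_le _ _)
    have hsplit := Finset.sum_Ioc_consecutive p (Nat.zero_le k) hkK
    have e1 : Finset.Icc 1 k = Finset.Ioc 0 k := Finset.Icc_add_one_left_eq_Ioc 0 k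
    have e2 : Finset.Icc (k+1) K = Finset.Ioc k K := Finset.Icc_add_one_left_eq_Ioc k K
    have e3 : Finset.Icc 1 K = Finset.Ioc 0 K := Finset.Icc_add_one_left_eq_Ioc 0 K
    rw [e3] at hp1
    rw [hF k, e1, e2]
    linarith [hsplit]
  have swap1 : ∑ y ∈ Finset.Icc 1 K, ∑ k ∈ Finset.Icc 1 (y - 1), p y * (1 - (a - b k)) ^ 2
      = ∑ k ∈ Finset.Icc 1 (K - 1), ∑ y ∈ Finset.Icc (k+1) K, p y * (1 - (a - b k)) ^ 2 := by
    apply Finset.sum_comm'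
    intro y k
    simp only [Finset.mem_Icc]
    omega
  have swap2 : ∑ y ∈ Finset.Icc 1 K, ∑ k ∈ Finset.Icc y (K - 1), p y * (1 - (b k - a)) ^ 2
      = ∑ k ∈ Finset.Icc 1 (K - 1), ∑ y ∈ Finset.Icc 1 k, p y * (1 - (b k - a)) ^ 2 := by
    apply Finset.sum_comm'
    intro y k
    simp only [Finset.mem_Icc]
    omega
  calc ∑ y ∈ Finset.Icc 1 K, p y * phiAT K (fun u => (1 - u) ^ 2) a b y
      = ∑ y ∈ Finset.Icc 1 K, (∑ k ∈ Finset.Icc 1 (y - 1), p y * (1 - (a - b k)) ^ 2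
          + ∑ k ∈ Finset.Icc y (K - 1), p y * (1 - (b k - a)) ^ 2) := by
        refine Finset.sum_congr rfl fun y _ => ?_
        simp only [phiAT, mul_add, Finset.mul_sum]
    _ = ∑ k ∈ Finset.Icc 1 (K - 1), ∑ y ∈ Finset.Icc (k+1) K, p y * (1 - (a - b k)) ^ 2
        + ∑ k ∈ Finset.Icc 1 (K - 1), ∑ y ∈ Finset.Icc 1 k, p y * (1 - (b k - a)) ^ 2 := by
        rw [Finset.sum_add_distrib, swap1, swap2]
    _ = ∑ k ∈ Finset.Icc 1 (K - 1),
          ((1 - F k) * (1 - (a - b k)) ^ 2 + F k * (1 - (b k - a)) ^ 2) := by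
        rw [← Finset.sum_add_distrib]
        refine Finset.sum_congr rfl fun k hk => ?_
        rw [← Finset.sum_mul, ← Finset.sum_mul, key k hk, ← hF k]
    _ = ∑ k ∈ Finset.Icc 1 (K - 1),
          ((a - b k - 1 + 2 * F k) ^ 2 + 4 * (F k * (1 - F k))) := by
        refine Finset.sum_congr rfl fun k _ => ?_
        ring

lemma max_sub_max_neg (r : ℝ) : max r 0 - max (-r) 0 = r := by
  rcases le_total 0 r with h | h
  · rw [max_eq_left h, max_eq_right (neg_nonpos.mpr h)]; ring
  · rw [max_eq_right h, max_eq_left (neg_nonneg.mpr h)]; ring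

/-- Minimizer characterization of Theorem 4 for the Squared-AT loss `φ(u) = (1-u)²`:
with `F_y(x) = Σ_{l=1}^{y} p(x)_l`, `F̄_y = ∫ F_y dν`, `b̃_y = 2(F̄_y - F̄_1)` and
`ã(x) = 1 + (2/(K-1)) Σ_{y=1}^{K-1} (F̄_y - F̄_1) - (2/(K-1)) Σ_{y=1}^{K-1} F_y(x)`,
the pair `(ã, b̃)` minimizes the Squared-AT surrogate risk over all measurable `a` and
all `b` with `b_1 = 0`; `b̃` is ordered with `b̃_1 = 0`, and any finite-risk minimizer
coincides with `(ã, b̃)` (ν-a.e. for the 1DT, on indices 1,…,K-1 for the biases). -/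
theorem stmt8 (K d : ℕ) (hK : 3 ≤ K)
    (ν : Measure (Fin d → ℝ)) [IsProbabilityMeasure ν]
    (p : (Fin d → ℝ) → ℕ → ℝ)
    (hpm : ∀ y, Measurable fun x => p x y)
    (hp0 : ∀ x y, 0 ≤ p x y)
    (hp1 : ∀ x, ∑ y ∈ Finset.Icc 1 K, p x y = 1)
    (F : (Fin d → ℝ) → ℕ → ℝ) (hF : ∀ x y, F x y = ∑ l ∈ Finset.Icc 1 y, p x l)
    (Fbar : ℕ → ℝ) (hFbar : ∀ y, Fbar y = ∫ x, F x y ∂ν)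
    (tb : ℕ → ℝ) (htb : ∀ y, tb y = 2 * (Fbar y - Fbar 1))
    (ta : (Fin d → ℝ) → ℝ)
    (hta : ∀ x, ta x = 1 + (2 / ((K : ℝ) - 1)) * (∑ y ∈ Finset.Icc 1 (K - 1), (Fbar y - Fbar 1))
        - (2 / ((K : ℝ) - 1)) * ∑ y ∈ Finset.Icc 1 (K - 1), F x y)
    (Risk : ((Fin d → ℝ) → ℝ) → (ℕ → ℝ) → ENNReal)
    (hRisk : ∀ a b, Risk a b =
      ∫⁻ x, ENNReal.ofReal
        (∑ y ∈ Finset.Icc 1 K, p x y * phiAT K (fun u => (1 - u) ^ 2) (a x) b y) ∂ν) :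
    tb 1 = 0 ∧ (∀ k, 1 ≤ k → k + 1 ≤ K - 1 → tb k ≤ tb (k + 1)) ∧
    ∀ a : (Fin d → ℝ) → ℝ, Measurable a → ∀ b : ℕ → ℝ, b 1 = 0 →
      Risk ta tb ≤ Risk a b ∧
      (Risk a b = Risk ta tb → Risk ta tb < ⊤ →
        (a =ᵐ[ν] ta ∧ ∀ y ∈ Finset.Icc 1 (K - 1), b y = tb y)) := by
  have hK3 : (3:ℝ) ≤ (K:ℝ) := by exact_mod_cast hK
  have hKne : (K:ℝ) - 1 ≠ 0 := by linarith
  have hc2 : (2 / ((K:ℝ) - 1)) * ((K:ℝ) - 1) = 2 := div_mul_cancel₀ 2 hKne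
  have hcard : ((Finset.Icc 1 (K - 1)).card : ℝ) = (K:ℝ) - 1 := by
    rw [Nat.card_Icc]
    have h1 : K - 1 + 1 - 1 = K - 1 := by omega
    rw [h1, Nat.cast_sub (by omega)]
    simp
  -- measurability and integrability of F
  have hFm : ∀ y, Measurable fun x => F x y := by
    intro y
    have e : (fun x => F x y) = fun x => ∑ l ∈ Finset.Icc 1 y, p x l := funext fun x => hF x y
    rw [e]; exact Finset.measurable_sum _ fun l _ => hpm l
  have hF0 : ∀ x y, 0 ≤ F x y := fun x y => by
    rw [hF]; exact Finset.sum_nonneg fun l _ => hp0 x l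
  have hF1 : ∀ x, ∀ y, y ≤ K → F x y ≤ 1 := by
    intro x y hy
    rw [hF, ← hp1 x]
    exact Finset.sum_le_sum_of_subset_of_nonneg
      (Finset.Icc_subset_Icc_right hy) (fun l _ _ => hp0 x l)
  have hFint : ∀ y, y ≤ K → Integrable (fun x => F x y) ν := by
    intro y hy
    refine (integrable_const (1:ℝ)).mono' (hFm y).aestronglyMeasurable ?_
    filter_upwards with x
    rw [Real.norm_eq_abs, abs_of_nonneg (hF0 x y)]
    exact hF1 x y hy
  -- ta measurable and integrable
  have hta' : ta = fun x => (1 + (2 / ((K:ℝ) - 1)) * (∑ y ∈ Finset.Icc 1 (K - 1), (Fbar y - Fbar 1)))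
      - (2 / ((K:ℝ) - 1)) * ∑ y ∈ Finset.Icc 1 (K - 1), F x y := by
    funext x; exact hta x
  have htam : Measurable ta := by
    rw [hta']
    exact measurable_const.sub ((Finset.measurable_sum _ fun y _ => hFm y).const_mul _)
  have hSFint : Integrable (fun x => ∑ y ∈ Finset.Icc 1 (K - 1), F x y) ν :=
    integrable_finset_sum _ fun y hy => hFint y (by rw [Finset.mem_Icc] at hy; omega)
  have htaint : Integrable ta ν := by
    rw [hta']
    exact (integrable_const _).sub (hSFint.const_mul _)
  have hSFbar : ∫ x, (∑ y ∈ Finset.Icc 1 (K - 1), F x y) ∂ν = ∑ y ∈ Finset.Icc 1 (K - 1), Fbar y := by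
    rw [integral_finset_sum _ fun y hy => hFint y (by rw [Finset.mem_Icc] at hy; omega)]
    exact Finset.sum_congr rfl fun y _ => (hFbar y).symm
  have htaval : ∫ x, ta x ∂ν = (1 + (2 / ((K:ℝ) - 1)) * (∑ y ∈ Finset.Icc 1 (K - 1), (Fbar y - Fbar 1)))
      - (2 / ((K:ℝ) - 1)) * ∑ y ∈ Finset.Icc 1 (K - 1), Fbar y := by
    rw [hta', integral_sub (integrable_const _) (hSFint.const_mul _),
      integral_const, integral_const_mul, hSFbar]
    simp
  -- the residual functions t k
  set t : ℕ → (Fin d → ℝ) → ℝ := fun k x => ta x - tb k - 1 + 2 * F x k with ht_def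
  have htm : ∀ k, Measurable (t k) := fun k =>
    ((htam.sub measurable_const).sub measurable_const).add ((hFm k).const_mul 2)
  have htint : ∀ k, k ≤ K → Integrable (t k) ν := fun k hk =>
    ((htaint.sub (integrable_const _)).sub (integrable_const _)).add ((hFint k hk).const_mul 2)
  have hSB : (∑ y ∈ Finset.Icc 1 (K - 1), (Fbar y - Fbar 1))
      = (∑ y ∈ Finset.Icc 1 (K - 1), Fbar y) - ((K:ℝ) - 1) * Fbar 1 := by
    rw [Finset.sum_sub_distrib, Finset.sum_const, nsmul_eq_mul, hcard]
  have htval : ∀ k, k ≤ K → ∫ x, t k x ∂ν = 0 := by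
    intro k hk
    have i1 : Integrable (fun x => ta x - tb k) ν := htaint.sub (integrable_const _)
    have i2 : Integrable (fun x => ta x - tb k - 1) ν := i1.sub (integrable_const _)
    have i3 : Integrable (fun x => 2 * F x k) ν := (hFint k hk).const_mul 2
    have hval : ∫ x, (ta x - tb k - 1 + 2 * F x k) ∂ν = (∫ x, ta x ∂ν) - tb k - 1 + 2 * Fbar k := by
      rw [integral_add i2 i3, integral_sub i1 (integrable_const _),
        integral_sub htaint (integrable_const _), integral_const, integral_const,
        integral_const_mul, ← hFbar k]
      simp
    show ∫ x, (ta x - tb k - 1 + 2 * F x k) ∂ν = 0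
    rw [hval, htaval, htb k, hSB]
    field_simp
    ring
  -- pointwise sum of t over thresholds is zero
  have hsumt : ∀ x, ∑ k ∈ Finset.Icc 1 (K - 1), t k x = 0 := by
    intro x
    have h1 : ∀ k, t k x = ((2 / ((K:ℝ) - 1)) * (∑ y ∈ Finset.Icc 1 (K - 1), (Fbar y - Fbar 1))
        - (2 / ((K:ℝ) - 1)) * ∑ y ∈ Finset.Icc 1 (K - 1), F x y)
        - 2 * (Fbar k - Fbar 1) + 2 * F x k := by
      intro k
      rw [ht_def]
      simp only
      rw [hta x, htb k]
      ring
    rw [Finset.sum_congr rfl fun k _ => h1 k]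
    rw [Finset.sum_add_distrib, Finset.sum_sub_distrib, Finset.sum_const, nsmul_eq_mul, hcard,
      ← Finset.mul_sum, ← Finset.mul_sum]
    linear_combination ((∑ y ∈ Finset.Icc 1 (K - 1), (Fbar y - Fbar 1))
      - (∑ y ∈ Finset.Icc 1 (K - 1), F x y)) * hc2
  refine ⟨by rw [htb]; ring, ?_, ?_⟩
  · intro k hk1 hk2
    rw [htb, htb]
    have hmono : Fbar k ≤ Fbar (k + 1) := by
      rw [hFbar, hFbar]
      refine integral_mono (hFint k (by omega)) (hFint (k+1) (by omega)) fun x => ?_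
      rw [hF, hF]
      exact Finset.sum_le_sum_of_subset_of_nonneg
        (Finset.Icc_subset_Icc_right (by omega)) (fun l _ _ => hp0 x l)
    linarith
  · intro a ham b hb1
    set g : (Fin d → ℝ) → ℝ := fun x =>
      ∑ y ∈ Finset.Icc 1 K, p x y * phiAT K (fun u => (1 - u) ^ 2) (a x) b y with hg_def
    set gt : (Fin d → ℝ) → ℝ := fun x =>
      ∑ y ∈ Finset.Icc 1 K, p x y * phiAT K (fun u => (1 - u) ^ 2) (ta x) tb y with hgt_def
    set Q : (Fin d → ℝ) → ℝ := fun x =>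
      ∑ k ∈ Finset.Icc 1 (K - 1), ((a x - ta x) - (b k - tb k)) ^ 2 with hQ_def
    set hh : (Fin d → ℝ) → ℝ := fun x =>
      ∑ k ∈ Finset.Icc 1 (K - 1), t k x * (b k - tb k) with hh_def
    have htkx : ∀ k x, t k x = ta x - tb k - 1 + 2 * F x k := fun _ _ => rfl
    have hphi0 : ∀ (A : ℝ) (B : ℕ → ℝ) (y : ℕ), 0 ≤ phiAT K (fun u => (1 - u) ^ 2) A B y := by
      intro A B y
      exact add_nonneg (Finset.sum_nonneg fun _ _ => by positivity)
        (Finset.sum_nonneg fun _ _ => by positivity)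
    have hg0 : ∀ x, 0 ≤ g x := fun x => by
      rw [hg_def]; exact Finset.sum_nonneg fun y _ => mul_nonneg (hp0 x y) (hphi0 _ _ _)
    have hgt0 : ∀ x, 0 ≤ gt x := fun x => by
      rw [hgt_def]; exact Finset.sum_nonneg fun y _ => mul_nonneg (hp0 x y) (hphi0 _ _ _)
    have hQ0 : ∀ x, 0 ≤ Q x := fun x => by
      rw [hQ_def]; exact Finset.sum_nonneg fun _ _ => sq_nonneg _
    have hQm : Measurable Q := by
      rw [hQ_def]
      exact Finset.measurable_sum _ fun k _ =>
        ((ham.sub htam).sub measurable_const).pow_const 2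
    have hhm : Measurable hh := by
      rw [hh_def]
      exact Finset.measurable_sum _ fun k _ => (htm k).mul_const _
    have hhint : Integrable hh ν := by
      rw [hh_def]
      exact integrable_finset_sum _ fun k hk =>
        (htint k (by rw [Finset.mem_Icc] at hk; omega)).mul_const _
    have hhval : ∫ x, hh x ∂ν = 0 := by
      rw [hh_def]
      rw [integral_finset_sum _ fun k hk =>
        (htint k (by rw [Finset.mem_Icc] at hk; omega)).mul_const _]
      refine Finset.sum_eq_zero fun k hk => ?_
      rw [integral_mul_const, htval k (by rw [Finset.mem_Icc] at hk; omega), zero_mul]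
    have hpint : Integrable (fun x => max (hh x) 0) ν := hhint.pos_part
    have hnint : Integrable (fun x => max (-hh x) 0) ν := hhint.neg.pos_part
    have hc0 : ∫ x, max (hh x) 0 ∂ν = ∫ x, max (-hh x) 0 ∂ν := by
      have hsub : ∫ x, (max (hh x) 0 - max (-hh x) 0) ∂ν
          = ∫ x, max (hh x) 0 ∂ν - ∫ x, max (-hh x) 0 ∂ν := integral_sub hpint hnint
      have he : (fun x => max (hh x) 0 - max (-hh x) 0) = hh :=
        funext fun x => max_sub_max_neg (hh x)
      rw [he, hhval] at hsub
      linarith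
    have hgid : ∀ x, g x = gt x + Q x - 2 * hh x := by
      intro x
      rw [hg_def, hgt_def, hQ_def, hh_def]
      simp only
      rw [inner_eq K (p x) (F x) (hp1 x) (hF x) (a x) b,
        inner_eq K (p x) (F x) (hp1 x) (hF x) (ta x) tb]
      have e1 : ∀ k, ((a x - b k - 1 + 2 * F x k) ^ 2 + 4 * (F x k * (1 - F x k)))
          = (((ta x - tb k - 1 + 2 * F x k) ^ 2 + 4 * (F x k * (1 - F x k)))
            + ((((a x - ta x) - (b k - tb k)) ^ 2 - 2 * (t k x * (b k - tb k)))
              + (2 * (a x - ta x)) * t k x)) := by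
        intro k
        rw [htkx]
        ring
      rw [Finset.sum_congr rfl fun k _ => e1 k]
      have m1 : ∑ k ∈ Finset.Icc 1 (K - 1), 2 * (t k x * (b k - tb k))
          = 2 * ∑ k ∈ Finset.Icc 1 (K - 1), t k x * (b k - tb k) :=
        (Finset.mul_sum _ _ _).symm
      have m2 : ∑ k ∈ Finset.Icc 1 (K - 1), (2 * (a x - ta x)) * t k x
          = (2 * (a x - ta x)) * ∑ k ∈ Finset.Icc 1 (K - 1), t k x :=
        (Finset.mul_sum _ _ _).symm
      simp only [Finset.sum_add_distrib, Finset.sum_sub_distrib]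
      rw [m1, m2, hsumt x, mul_zero]
      ring
    have hRa : Risk a b = ∫⁻ x, ENNReal.ofReal (g x) ∂ν := by
      rw [hRisk a b]
    have hRt : Risk ta tb = ∫⁻ x, ENNReal.ofReal (gt x) ∂ν := by
      rw [hRisk ta tb]
    have key : ∫⁻ x, ENNReal.ofReal (g x) ∂ν
        = ∫⁻ x, ENNReal.ofReal (gt x) ∂ν + ∫⁻ x, ENNReal.ofReal (Q x) ∂ν := by
      have pt : ∀ x, ENNReal.ofReal (g x) + ENNReal.ofReal (2 * max (hh x) 0)
          = (ENNReal.ofReal (gt x) + ENNReal.ofReal (Q x))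
            + ENNReal.ofReal (2 * max (-hh x) 0) := by
        intro x
        rw [← ENNReal.ofReal_add (hg0 x) (mul_nonneg (by norm_num) (le_max_right _ _)),
          ← ENNReal.ofReal_add (hgt0 x) (hQ0 x),
          ← ENNReal.ofReal_add (add_nonneg (hgt0 x) (hQ0 x))
            (mul_nonneg (by norm_num) (le_max_right _ _))]
        congr 1
        have h1 := hgid x
        have h2 := max_sub_max_neg (hh x)
        linarith
      have L : ∫⁻ x, (ENNReal.ofReal (g x) + ENNReal.ofReal (2 * max (hh x) 0)) ∂ν
          = (∫⁻ x, ENNReal.ofReal (g x) ∂ν)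
            + ∫⁻ x, ENNReal.ofReal (2 * max (hh x) 0) ∂ν :=
        lintegral_add_right _ (((hhm.max measurable_const).const_mul 2).ennreal_ofReal)
      have R1 : ∫⁻ x, ((ENNReal.ofReal (gt x) + ENNReal.ofReal (Q x))
            + ENNReal.ofReal (2 * max (-hh x) 0)) ∂ν
          = (∫⁻ x, (ENNReal.ofReal (gt x) + ENNReal.ofReal (Q x)) ∂ν)
            + ∫⁻ x, ENNReal.ofReal (2 * max (-hh x) 0) ∂ν :=
        lintegral_add_right _ (((hhm.neg.max measurable_const).const_mul 2).ennreal_ofReal)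
      have R2 : ∫⁻ x, (ENNReal.ofReal (gt x) + ENNReal.ofReal (Q x)) ∂ν
          = (∫⁻ x, ENNReal.ofReal (gt x) ∂ν) + ∫⁻ x, ENNReal.ofReal (Q x) ∂ν :=
        lintegral_add_right _ hQm.ennreal_ofReal
      have hEq : (∫⁻ x, ENNReal.ofReal (g x) ∂ν)
            + ∫⁻ x, ENNReal.ofReal (2 * max (hh x) 0) ∂ν
          = ((∫⁻ x, ENNReal.ofReal (gt x) ∂ν) + ∫⁻ x, ENNReal.ofReal (Q x) ∂ν)
            + ∫⁻ x, ENNReal.ofReal (2 * max (-hh x) 0) ∂ν := by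
        rw [← L, ← R2, ← R1]
        exact lintegral_congr pt
      have hAB : ∫⁻ x, ENNReal.ofReal (2 * max (hh x) 0) ∂ν
          = ∫⁻ x, ENNReal.ofReal (2 * max (-hh x) 0) ∂ν := by
        rw [← ofReal_integral_eq_lintegral_ofReal (hpint.const_mul 2)
            (ae_of_all _ fun x => mul_nonneg (by norm_num) (le_max_right _ _)),
          ← ofReal_integral_eq_lintegral_ofReal (hnint.const_mul 2)
            (ae_of_all _ fun x => mul_nonneg (by norm_num) (le_max_right _ _)),
          integral_const_mul, integral_const_mul, hc0]
      rw [hAB] at hEq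
      have hfinB : ∫⁻ x, ENNReal.ofReal (2 * max (-hh x) 0) ∂ν ≠ ⊤ := by
        rw [← ofReal_integral_eq_lintegral_ofReal (hnint.const_mul 2)
            (ae_of_all _ fun x => mul_nonneg (by norm_num) (le_max_right _ _))]
        exact ENNReal.ofReal_ne_top
      rw [add_comm (∫⁻ x, ENNReal.ofReal (g x) ∂ν) _,
        add_comm ((∫⁻ x, ENNReal.ofReal (gt x) ∂ν) + ∫⁻ x, ENNReal.ofReal (Q x) ∂ν) _] at hEq
      exact (ENNReal.add_right_inj hfinB).mp hEq
    constructor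
    · rw [hRa, hRt, key]
      exact le_self_add
    · intro heq hfin
      rw [hRa, hRt] at heq
      rw [hRt] at hfin
      have hQzero : ∫⁻ x, ENNReal.ofReal (Q x) ∂ν = 0 := by
        refine ((ENNReal.add_right_inj hfin.ne).mp ?_).symm
        rw [add_zero, ← key]
        exact heq.symm
      have hQae := (lintegral_eq_zero_iff hQm.ennreal_ofReal).mp hQzero
      have hae : ∀ᵐ x ∂ν, ∀ k ∈ Finset.Icc 1 (K - 1), a x - ta x = b k - tb k := by
        filter_upwards [hQae] with x hx
        simp only [Pi.zero_apply] at hx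
        have hx0 : Q x = 0 := le_antisymm (by
          have := ENNReal.ofReal_eq_zero.mp hx
          linarith) (hQ0 x)
        rw [hQ_def] at hx0
        simp only at hx0
        intro k hk
        have hsq := (Finset.sum_eq_zero_iff_of_nonneg
          (fun i _ => sq_nonneg ((a x - ta x) - (b i - tb i)))).mp hx0 k hk
        have := pow_eq_zero_iff (n := 2) (by norm_num) |>.mp hsq
        linarith
      have htb1 : tb 1 = 0 := by rw [htb]; ring
      have hmem1 : (1 : ℕ) ∈ Finset.Icc 1 (K - 1) := Finset.mem_Icc.mpr ⟨le_refl 1, by omega⟩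
      constructor
      · filter_upwards [hae] with x hx
        have h1 := hx 1 hmem1
        rw [hb1, htb1] at h1
        linarith
      · intro y hy
        haveI : (ae ν).NeBot := ae_neBot.mpr (IsProbabilityMeasure.ne_zero ν)
        obtain ⟨x0, hx0⟩ := hae.exists
        have h1 := hx0 1 hmem1
        have hy' := hx0 y hy
        rw [hb1, htb1] at h1
        linarith
end

section
/- Say a function f : ℝ → ℝ is piecewise linear (PL) with at most N knots if there exists a finite set S ⊆ ℝ with |S| ≤ N such that on every open interval disjoint from S, f coincides with an affine function. Let K ≥ 3, let φ : ℝ → [0,∞) be PL with at most I knots (I ∈ ℕ, I ≥ 1), let b ∈ ℝ^{K−1}, and let J be the number of distinct values among b_1,…,b_{K−1}. Then: (i) for y ∈ {1, K}, the map a ↦ φ_IT(a, b, y) is PL with at most I knots; (ii) for 1 < y < K, the map a ↦ φ_IT(a, b, y) is PL with at most 2I knots; (iii) for every probability vector q = (q_1,…,q_K), both a ↦ Σ_{y=1}^{K} q_y · φ_AT(a, b, y) and a ↦ Σ_{y=1}^{K} q_y · φ_IT(a, b, y) are PL with at most 2·I·J knots. (Theorem 8 on piecewise linearity of the AT/IT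 losses and the conditional surrogate risk.) -/
open Finset

/-- The immediate-threshold (IT) loss built from `φ`:
`φ_IT(a,b,1) = φ(b_1 - a)`, `φ_IT(a,b,K) = φ(a - b_{K-1})`, and
`φ_IT(a,b,y) = φ(a - b_{y-1}) + φ(b y - a)` for `1 < y < K`. -/
noncomputable def phiIT (K : ℕ) (φ : ℝ → ℝ) (a : ℝ) (b : ℕ → ℝ) (y : ℕ) : ℝ :=
  if y = 1 then φ (b 1 - a)
  else if y = K then φ (a - b (K - 1))
  else φ (a - b (y - 1)) + φ (b y - a)

/-- `f : ℝ → ℝ` is piecewise linear (PL) with at most `N` knots: there is a finite set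
`S ⊆ ℝ` with `|S| ≤ N` such that on every open interval disjoint from `S`, `f` coincides
with an affine function. -/
def IsPL (N : ℕ) (f : ℝ → ℝ) : Prop :=
  ∃ S : Finset ℝ, S.card ≤ N ∧
    ∀ x y : ℝ, (∀ z ∈ Set.Ioo x y, z ∉ S) →
      ∃ c e : ℝ, ∀ z ∈ Set.Ioo x y, f z = c + e * z

/-- Piecewise linear with a given knot set. -/
def PLw (S : Finset ℝ) (f : ℝ → ℝ) : Prop :=
  ∀ x y : ℝ, (∀ z ∈ Set.Ioo x y, z ∉ S) →
    ∃ c e : ℝ, ∀ z ∈ Set.Ioo x y, f z = c + e * z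

lemma PLw.mono {S T : Finset ℝ} {f : ℝ → ℝ} (h : PLw S f) (hST : S ⊆ T) : PLw T f :=
  fun x y hxy => h x y (fun z hz hzS => hxy z hz (hST hzS))

lemma PLw.add {T : Finset ℝ} {f g : ℝ → ℝ} (hf : PLw T f) (hg : PLw T g) :
    PLw T (fun a => f a + g a) := by
  intro x y hxy
  obtain ⟨c1, e1, h1⟩ := hf x y hxy
  obtain ⟨c2, e2, h2⟩ := hg x y hxy
  refine ⟨c1 + c2, e1 + e2, fun z hz => ?_⟩
  show f z + g z = _
  rw [h1 z hz, h2 z hz]; ring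

lemma PLw.smul {T : Finset ℝ} {f : ℝ → ℝ} (c : ℝ) (hf : PLw T f) :
    PLw T (fun a => c * f a) := by
  intro x y hxy
  obtain ⟨c1, e1, h1⟩ := hf x y hxy
  refine ⟨c * c1, c * e1, fun z hz => ?_⟩
  show c * f z = _
  rw [h1 z hz]; ring

lemma PLw.sum {T : Finset ℝ} {ι : Type*} (s : Finset ι) (f : ι → ℝ → ℝ)
    (h : ∀ i ∈ s, PLw T (f i)) : PLw T (fun a => ∑ i ∈ s, f i a) := by
  induction s using Finset.cons_induction with
  | empty => intro x y hxy; exact ⟨0, 0, fun z hz => by simp⟩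
  | cons i s hi ih =>
    simp only [Finset.sum_cons]
    exact (h i (Finset.mem_cons_self ..)).add
      (ih fun j hj => h j (Finset.mem_cons.2 (Or.inr hj)))

lemma PLw.comp_sub {S : Finset ℝ} {φ : ℝ → ℝ} (hφ : PLw S φ) (c : ℝ) :
    PLw (S.image (fun s => c + s)) (fun a => φ (a - c)) := by
  intro x y hxy
  obtain ⟨c1, e1, h1⟩ := hφ (x - c) (y - c) (fun z hz hzS =>
    hxy (c + z) ⟨by linarith [hz.1], by linarith [hz.2]⟩ (Finset.mem_image_of_mem _ hzS))
  refine ⟨c1 - e1 * c, e1, fun z hz => ?_⟩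
  show φ (z - c) = _
  rw [h1 (z - c) ⟨by linarith [hz.1], by linarith [hz.2]⟩]; ring

lemma PLw.comp_neg {S : Finset ℝ} {φ : ℝ → ℝ} (hφ : PLw S φ) (c : ℝ) :
    PLw (S.image (fun s => c - s)) (fun a => φ (c - a)) := by
  intro x y hxy
  obtain ⟨c1, e1, h1⟩ := hφ (c - y) (c - x) (fun z hz hzS =>
    hxy (c - z) ⟨by linarith [hz.2], by linarith [hz.1]⟩ (Finset.mem_image_of_mem _ hzS))
  refine ⟨c1 + e1 * c, -e1, fun z hz => ?_⟩
  show φ (c - z) = _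
  rw [h1 (c - z) ⟨by linarith [hz.2], by linarith [hz.1]⟩]; ring

/-- Theorem 8: if `φ` is PL with at most `I` knots and `b` takes `J` distinct values on
`{1,…,K-1}`, then (i) `a ↦ φ_IT(a,b,y)` is PL with at most `I` knots for `y ∈ {1,K}` and
(ii) with at most `2I` knots for `1 < y < K`; and (iii) for every probability vector `q`,
the conditional AT and IT surrogate risks `a ↦ Σ_y q_y·φ_AT(a,b,y)` and
`a ↦ Σ_y q_y·φ_IT(a,b,y)` are PL with at most `2·I·J` knots. -/
theorem stmt18 (K : ℕ) (hK : 3 ≤ K) (φ : ℝ → ℝ) (hφ0 : ∀ u, 0 ≤ φ u)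
    (I : ℕ) (hI : 1 ≤ I) (hφPL : IsPL I φ)
    (b : ℕ → ℝ) (J : ℕ) (hJ : J = ((Finset.Icc 1 (K - 1)).image b).card) :
    (∀ y : ℕ, y = 1 ∨ y = K → IsPL I fun a => phiIT K φ a b y) ∧
    (∀ y : ℕ, 1 < y → y < K → IsPL (2 * I) fun a => phiIT K φ a b y) ∧
    (∀ q : ℕ → ℝ, (∀ y ∈ Finset.Icc 1 K, 0 ≤ q y) → (∑ y ∈ Finset.Icc 1 K, q y = 1) →
      IsPL (2 * I * J) (fun a => ∑ y ∈ Finset.Icc 1 K, q y * phiAT K φ a b y) ∧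
      IsPL (2 * I * J) (fun a => ∑ y ∈ Finset.Icc 1 K, q y * phiIT K φ a b y)) := by
  obtain ⟨S, hScard, hS⟩ := hφPL
  have hS' : PLw S φ := hS
  refine ⟨?_, ?_, ?_⟩
  · -- part (i)
    rintro y (h | h)
    · have he : (fun a => phiIT K φ a b y) = fun a => φ (b 1 - a) := by
        funext a; rw [phiIT, if_pos h]
      rw [he]
      exact ⟨S.image (fun s => b 1 - s),
        le_trans Finset.card_image_le hScard, hS'.comp_neg (b 1)⟩
    · have he : (fun a => phiIT K φ a b y) = fun a => φ (a - b (K - 1)) := by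
        funext a; rw [phiIT, if_neg (by omega : y ≠ 1), if_pos h]
      rw [he]
      exact ⟨S.image (fun s => b (K - 1) + s),
        le_trans Finset.card_image_le hScard, hS'.comp_sub (b (K - 1))⟩
  · -- part (ii)
    intro y hy1 hyK
    have he : (fun a => phiIT K φ a b y) =
        fun a => φ (a - b (y - 1)) + φ (b y - a) := by
      funext a; rw [phiIT, if_neg (by omega : y ≠ 1), if_neg (by omega : y ≠ K)]
    rw [he]
    refine ⟨S.image (fun s => b (y - 1) + s) ∪ S.image (fun s => b y - s), ?_, ?_⟩
    · calc _ ≤ (S.image (fun s => b (y - 1) + s)).card + (S.image (fun s => b y - s)).card :=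
            Finset.card_union_le _ _
        _ ≤ I + I := add_le_add (le_trans Finset.card_image_le hScard)
            (le_trans Finset.card_image_le hScard)
        _ = 2 * I := by ring
    · exact ((hS'.comp_sub (b (y - 1))).mono Finset.subset_union_left).add
        ((hS'.comp_neg (b y)).mono Finset.subset_union_right)
  · -- part (iii)
    intro q hq0 hq1
    set T : Finset ℝ := ((Finset.Icc 1 (K - 1)).image b).biUnion
      (fun v => S.image (fun s => v + s) ∪ S.image (fun s => v - s)) with hT
    have hTcard : T.card ≤ 2 * I * J := by
      calc T.card ≤ ∑ v ∈ ((Finset.Icc 1 (K - 1)).image b),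
            ((S.image (fun s => v + s)) ∪ (S.image (fun s => v - s))).card :=
          Finset.card_biUnion_le
        _ ≤ ∑ _v ∈ ((Finset.Icc 1 (K - 1)).image b), 2 * I :=
          Finset.sum_le_sum (fun v _ => by
            calc _ ≤ (S.image (fun s => v + s)).card + (S.image (fun s => v - s)).card :=
                  Finset.card_union_le _ _
              _ ≤ I + I := add_le_add (le_trans Finset.card_image_le hScard)
                  (le_trans Finset.card_image_le hScard)
              _ = 2 * I := by ring)
        _ = J * (2 * I) := by rw [Finset.sum_const, smul_eq_mul, hJ]
        _ = 2 * I * J := by ring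
    have hsub : ∀ k ∈ Finset.Icc 1 (K - 1), PLw T (fun a => φ (a - b k)) := by
      intro k hk
      refine (hS'.comp_sub (b k)).mono (fun t ht => ?_)
      exact Finset.mem_biUnion.2 ⟨b k, Finset.mem_image_of_mem b hk,
        Finset.mem_union_left _ ht⟩
    have hneg : ∀ k ∈ Finset.Icc 1 (K - 1), PLw T (fun a => φ (b k - a)) := by
      intro k hk
      refine (hS'.comp_neg (b k)).mono (fun t ht => ?_)
      exact Finset.mem_biUnion.2 ⟨b k, Finset.mem_image_of_mem b hk,
        Finset.mem_union_right _ ht⟩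
    constructor
    · refine ⟨T, hTcard, ?_⟩
      refine PLw.sum _ _ (fun y hy => ?_)
      rw [Finset.mem_Icc] at hy
      refine PLw.smul _ ?_
      show PLw T fun a => phiAT K φ a b y
      have he : (fun a => phiAT K φ a b y) = fun a =>
          (∑ k ∈ Finset.Icc 1 (y - 1), φ (a - b k)) +
          ∑ k ∈ Finset.Icc y (K - 1), φ (b k - a) := rfl
      rw [he]
      refine PLw.add (PLw.sum _ _ (fun k hk => ?_)) (PLw.sum _ _ (fun k hk => ?_))
      · rw [Finset.mem_Icc] at hk
        exact hsub k (Finset.mem_Icc.2 ⟨hk.1, by omega⟩)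
      · rw [Finset.mem_Icc] at hk
        exact hneg k (Finset.mem_Icc.2 ⟨by omega, hk.2⟩)
    · refine ⟨T, hTcard, ?_⟩
      refine PLw.sum _ _ (fun y hy => ?_)
      rw [Finset.mem_Icc] at hy
      refine PLw.smul _ ?_
      by_cases h1 : y = 1
      · have he : (fun a => phiIT K φ a b y) = fun a => φ (b 1 - a) := by
          funext a; rw [phiIT, if_pos h1]
        rw [he]
        exact hneg 1 (Finset.mem_Icc.2 ⟨le_refl _, by omega⟩)
      · by_cases h2 : y = K
        · have he : (fun a => phiIT K φ a b y) = fun a => φ (a - b (K - 1)) := by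
            funext a; rw [phiIT, if_neg h1, if_pos h2]
          rw [he]
          exact hsub (K - 1) (Finset.mem_Icc.2 ⟨by omega, le_refl _⟩)
        · have he : (fun a => phiIT K φ a b y) =
              fun a => φ (a - b (y - 1)) + φ (b y - a) := by
            funext a; rw [phiIT, if_neg h1, if_neg h2]
          rw [he]
          exact (hsub (y - 1) (Finset.mem_Icc.2 ⟨by omega, by omega⟩)).add
            (hneg y (Finset.mem_Icc.2 ⟨by omega, by omega⟩))
end

section
/- Let K ≥ 3 and consider the data model (ν, p). Let c > 0 and let φ : ℝ → [0,∞) be flat-bottom with edge c, i.e. φ is non-increasing, φ(u) > 0 for u < c, and φ(u) = 0 for u ≥ c. Let Risk(a,b) := ∫ Σ_{y=1}^{K} p(x)_y · L(a(x), b, y) dν(x), where L is either the all-threshold (AT) loss or the immediate-threshold (IT) loss built from φ. Suppose Risk attains its infimum over the set of pairs (a, b) with a : ℝ^d → ℝ measurable and b ∈ ℝ^{K−1} satisfying b_1 = 0 ≤ b_2 ≤ … ≤ b_{K−1}. Then the infimum is also attained at some such pair (ǎ, b̌) that additionally satisfies 0 ≤ b̌_{k+1} − b̌_k ≤ 2c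 for every k ∈ {1,…,K−2}. (Theorem on flat-bottom losses: optimized bias parameters can be taken with adjacent gaps at most 2c.) -/
open Finset MeasureTheory

/-- Theorem on flat-bottom losses: if `φ` is non-increasing, positive on `(-∞, c)` and
zero on `[c, ∞)` with `c > 0`, `L` is the AT or IT loss built from `φ`, and the surrogate
risk attains its infimum over pairs `(a, b)` with `a` measurable and
`b_1 = 0 ≤ b_2 ≤ … ≤ b_{K-1}`, then the infimum is also attained at some such pair whose
bias vector additionally satisfies `0 ≤ b̌_{k+1} - b̌_k ≤ 2c` for every `k ∈ {1,…,K-2}`. -/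
theorem stmt19 (K d : ℕ) (hK : 3 ≤ K)
    (ν : Measure (Fin d → ℝ)) [IsProbabilityMeasure ν]
    (p : (Fin d → ℝ) → ℕ → ℝ)
    (hpm : ∀ y, Measurable fun x => p x y)
    (hp0 : ∀ x y, 0 ≤ p x y)
    (hp1 : ∀ x, ∑ y ∈ Finset.Icc 1 K, p x y = 1)
    (c : ℝ) (hc : 0 < c)
    (φ : ℝ → ℝ) (hφ0 : ∀ u, 0 ≤ φ u) (hφanti : Antitone φ)
    (hφpos : ∀ u : ℝ, u < c → 0 < φ u) (hφzero : ∀ u : ℝ, c ≤ u → φ u = 0)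
    (L : ℝ → (ℕ → ℝ) → ℕ → ℝ)
    (hL : (∀ a b y, L a b y = phiAT K φ a b y) ∨ (∀ a b y, L a b y = phiIT K φ a b y))
    (Risk : ((Fin d → ℝ) → ℝ) → (ℕ → ℝ) → ENNReal)
    (hRisk : ∀ a b, Risk a b =
      ∫⁻ x, ENNReal.ofReal (∑ y ∈ Finset.Icc 1 K, p x y * L (a x) b y) ∂ν)
    (hmin : ∃ (a₀ : (Fin d → ℝ) → ℝ) (b₀ : ℕ → ℝ),
      (Measurable a₀ ∧ b₀ 1 = 0 ∧ ∀ k, 1 ≤ k → k + 1 ≤ K - 1 → b₀ k ≤ b₀ (k + 1)) ∧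
      ∀ (a : (Fin d → ℝ) → ℝ) (b : ℕ → ℝ),
        (Measurable a ∧ b 1 = 0 ∧ ∀ k, 1 ≤ k → k + 1 ≤ K - 1 → b k ≤ b (k + 1)) →
        Risk a₀ b₀ ≤ Risk a b) :
    ∃ (acheck : (Fin d → ℝ) → ℝ) (bcheck : ℕ → ℝ),
      (Measurable acheck ∧ bcheck 1 = 0 ∧
        ∀ k, 1 ≤ k → k + 1 ≤ K - 1 → bcheck k ≤ bcheck (k + 1)) ∧
      (∀ (a : (Fin d → ℝ) → ℝ) (b : ℕ → ℝ),
        (Measurable a ∧ b 1 = 0 ∧ ∀ k, 1 ≤ k → k + 1 ≤ K - 1 → b k ≤ b (k + 1)) →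
        Risk acheck bcheck ≤ Risk a b) ∧
      ∀ k, 1 ≤ k → k ≤ K - 2 →
        0 ≤ bcheck (k + 1) - bcheck k ∧ bcheck (k + 1) - bcheck k ≤ 2 * c := by
  obtain ⟨a₀, b₀, ⟨ha₀m, hb₀1, hb₀mono⟩, hopt⟩ := hmin
  set bc : ℕ → ℝ := fun n => ∑ k ∈ Finset.Icc 1 (n - 1), min (b₀ (k + 1) - b₀ k) (2 * c)
    with hbc
  have hne : (Finset.Icc 1 (K - 1)).Nonempty := ⟨1, by rw [Finset.mem_Icc]; omega⟩
  set ψ : ℝ → ℝ := fun u => (Finset.Icc 1 (K - 1)).sup' hne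
      (fun k => bc k + min (u - b₀ k) c) with hψ
  -- gap formula
  have hgap : ∀ k, 1 ≤ k → bc (k + 1) - bc k = min (b₀ (k + 1) - b₀ k) (2 * c) := by
    intro k hk
    obtain ⟨m, rfl⟩ : ∃ m, k = m + 1 := ⟨k - 1, by omega⟩
    have h1 : bc (m + 1 + 1) = bc (m + 1) + min (b₀ (m + 1 + 1) - b₀ (m + 1)) (2 * c) := by
      simp only [hbc, Nat.add_sub_cancel]
      rw [Finset.sum_Icc_succ_top (by omega)]
    rw [h1]; ring
  have hgap0 : ∀ k, 1 ≤ k → k + 1 ≤ K - 1 → 0 ≤ min (b₀ (k + 1) - b₀ k) (2 * c) := by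
    intro k h1 h2
    exact le_min (by linarith [hb₀mono k h1 h2]) (by linarith)
  -- dichotomy lemma
  have hD : ∀ j, 1 ≤ j → ∀ k, j ≤ k → k ≤ K - 1 →
      bc k - bc j ≤ b₀ k - b₀ j ∧ (2 * c ≤ bc k - bc j ∨ bc k - bc j = b₀ k - b₀ j) ∧
        0 ≤ bc k - bc j := by
    intro j hj k hjk
    induction k, hjk using Nat.le_induction with
    | base => intro _; refine ⟨by simp, Or.inr (by simp), by simp⟩
    | succ k hk ih =>
      intro hkK
      obtain ⟨ih1, ih2, ih3⟩ := ih (by omega)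
      have hg := hgap k (by omega)
      have hg0 : b₀ k ≤ b₀ (k + 1) := hb₀mono k (by omega) (by omega)
      rcases le_or_gt (b₀ (k + 1) - b₀ k) (2 * c) with h | h
      · rw [min_eq_left h] at hg
        refine ⟨by linarith, ?_, by linarith⟩
        rcases ih2 with h2 | h2
        · left; linarith
        · right; linarith
      · rw [min_eq_right h.le] at hg
        exact ⟨by linarith, Or.inl (by linarith), by linarith⟩
  have hψle : ∀ u k, 1 ≤ k → k ≤ K - 1 → bc k + min (u - b₀ k) c ≤ ψ u := by
    intro u k h1 h2
    rw [hψ]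
    exact Finset.le_sup' (fun k => bc k + min (u - b₀ k) c) (Finset.mem_Icc.2 ⟨h1, h2⟩)
  have lemA : ∀ u k, 1 ≤ k → k ≤ K - 1 → φ (ψ u - bc k) ≤ φ (u - b₀ k) := by
    intro u k h1 h2
    have h := hψle u k h1 h2
    rcases le_or_gt (u - b₀ k) c with hm | hm
    · rw [min_eq_left hm] at h
      exact hφanti (by linarith)
    · rw [min_eq_right hm.le] at h
      rw [hφzero _ (by linarith)]
      exact hφ0 _
  have lemB : ∀ u k, 1 ≤ k → k ≤ K - 1 → φ (bc k - ψ u) ≤ φ (b₀ k - u) := by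
    intro u k h1 h2
    obtain ⟨j, hj, hje⟩ := Finset.exists_mem_eq_sup' hne (fun k => bc k + min (u - b₀ k) c)
    rw [Finset.mem_Icc] at hj
    have hψe : ψ u = bc j + min (u - b₀ j) c := by rw [hψ]; exact hje
    have hminle : min (u - b₀ j) c ≤ u - b₀ j := min_le_left _ _
    have hminc : min (u - b₀ j) c ≤ c := min_le_right _ _
    rcases le_total j k with hjk | hkj
    · obtain ⟨_, hdi, _⟩ := hD j hj.1 k hjk h2
      rcases hdi with h2c | heq
      · rw [hφzero (bc k - ψ u) (by linarith)]
        exact hφ0 _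
      · exact hφanti (by linarith)
    · obtain ⟨hle, _, _⟩ := hD k h1 j hkj hj.2
      exact hφanti (by linarith)
  have hLle : ∀ u y, 1 ≤ y → y ≤ K → L (ψ u) bc y ≤ L u b₀ y := by
    intro u y hy1 hyK
    rcases hL with hA | hI
    · rw [hA, hA]
      simp only [phiAT]
      refine add_le_add (Finset.sum_le_sum ?_) (Finset.sum_le_sum ?_)
      · intro k hk; rw [Finset.mem_Icc] at hk
        exact lemA u k hk.1 (by omega)
      · intro k hk; rw [Finset.mem_Icc] at hk
        exact lemB u k (by omega) hk.2
    · rw [hI, hI]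
      simp only [phiIT]
      split_ifs with h1 h2
      · exact lemB u 1 le_rfl (by omega)
      · exact lemA u (K - 1) (by omega) le_rfl
      · exact add_le_add (lemA u (y - 1) (by omega) (by omega))
          (lemB u y (by omega) (by omega))
  have hψc : Continuous ψ := by
    rw [hψ]
    exact Continuous.finset_sup'_apply hne fun k _ =>
      continuous_const.add ((continuous_id.sub continuous_const).min continuous_const)
  have hRle : Risk (ψ ∘ a₀) bc ≤ Risk a₀ b₀ := by
    rw [hRisk, hRisk]
    refine lintegral_mono fun x => ENNReal.ofReal_le_ofReal (Finset.sum_le_sum fun y hy => ?_)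
    rw [Finset.mem_Icc] at hy
    exact mul_le_mul_of_nonneg_left (hLle (a₀ x) y hy.1 hy.2) (hp0 x y)
  refine ⟨ψ ∘ a₀, bc, ⟨hψc.measurable.comp ha₀m, ?_, ?_⟩, ?_, ?_⟩
  · simp [hbc]
  · intro k h1 h2
    have := hgap k h1
    have := hgap0 k h1 h2
    linarith
  · intro a b hab
    exact le_trans hRle (hopt a b hab)
  · intro k h1 h2
    have hg := hgap k h1
    have h0 := hgap0 k h1 (by omega)
    constructor
    · linarith
    · have := min_le_right (b₀ (k + 1) - b₀ k) (2 * c)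
      linarith
end
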